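/- arXiv:2012.02486 — 2 statements merged into one kernel-verified Lean document; each statement's English description precedes it below -/
import Mathlib

section
/- Under the Gaussian mixture model above, the adversarial risk with ℓ^p perturbation budget ρ of g(h) = sgn(⟨h, Θ⟩), ‖Θ‖₂ = 1, equals Φ((ρ‖Θ‖_q - ⟨μ,Θ⟩)/σ), and hence the adversarial gap equals Φ((ρ‖Θ‖_q - ⟨μ,Θ⟩)/σ) - Φ(-⟨μ,Θ⟩/σ). -/
/-!
Because `‖Θ‖₂ = 1`, the score `⟨h, Θ⟩` of `h ~ N(±μ, σ²I)` is `N(±⟨μ, Θ⟩, σ²)`. By Hölder's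
inequality and its equality case, the shifts `⟨Δh, Θ⟩` with `‖Δh‖_p ≤ ρ` fill
`[-ρ‖Θ‖_q, ρ‖Θ‖_q]`, so a point with label `y` can be pushed across the decision boundary exactly
when `y⟨h, Θ⟩ < ρ‖Θ‖_q` (up to a null boundary). Each label therefore contributes the Gaussian
tail `Φ((ρ‖Θ‖_q - ⟨μ, Θ⟩)/σ)`, and the natural risk is the case `ρ = 0`.
-/

open MeasureTheory ProbabilityTheory

noncomputable def sgn (x : ℝ) : ℝ := if 0 ≤ x then 1 else -1

/-- The Gaussian mixture model: `y` uniform on `{-1,+1}` and, conditionally on `y`,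
`h ~ N(y·μv, σ²I)` (modeled as a product of independent coordinates). -/
noncomputable def gaussMixture (n : ℕ) (μv : Fin n → ℝ) (σ : ℝ) :
    Measure ((Fin n → ℝ) × ℝ) :=
  (1 / 2 : ENNReal) • Measure.map (fun h => (h, (1 : ℝ)))
      (Measure.pi fun i => gaussianReal (μv i) (Real.toNNReal (σ ^ 2)))
  + (1 / 2 : ENNReal) • Measure.map (fun h => (h, (-1 : ℝ)))
      (Measure.pi fun i => gaussianReal (-μv i) (Real.toNNReal (σ ^ 2)))

open Real Set
open scoped NNReal

lemma sgn_mul_self (x : ℝ) : sgn x * x = |x| := by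
  unfold sgn; split_ifs with h
  · rw [one_mul, abs_of_nonneg h]
  · rw [neg_one_mul, abs_of_neg (not_le.mp h)]

lemma abs_sgn (x : ℝ) : |sgn x| = 1 := by
  unfold sgn; split_ifs <;> simp

lemma sgn_ne_one_iff {x : ℝ} : sgn x ≠ 1 ↔ x < 0 := by
  unfold sgn; split_ifs with h
  · norm_num [h]
  · norm_num [not_le.mp h]

lemma sgn_ne_neg_one_iff {x : ℝ} : sgn x ≠ -1 ↔ 0 ≤ x := by
  unfold sgn; split_ifs with h <;> norm_num [h]

section HolderDuality

variable {ι : Type*} [Fintype ι] {p q : ℝ}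

lemma abs_sum_mul_le_of_Lp_le (hpq : p.HolderConjugate q) {ρ : ℝ} {Δ : ι → ℝ}
    (hΔ : (∑ i, |Δ i| ^ p) ^ (1 / p) ≤ ρ) (Θ : ι → ℝ) :
    |∑ i, Δ i * Θ i| ≤ ρ * (∑ i, |Θ i| ^ q) ^ (1 / q) :=
  calc |∑ i, Δ i * Θ i| ≤ ∑ i, |Δ i| * |Θ i| := by
        simpa only [abs_mul] using Finset.abs_sum_le_sum_abs (fun i => Δ i * Θ i) Finset.univ
    _ ≤ (∑ i, |Δ i| ^ p) ^ (1 / p) * (∑ i, |Θ i| ^ q) ^ (1 / q) := by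
        simpa only [abs_abs] using inner_le_Lp_mul_Lq Finset.univ (|Δ ·|) (|Θ ·|) hpq
    _ ≤ ρ * (∑ i, |Θ i| ^ q) ^ (1 / q) := by gcongr

/-- The equality case of Hölder's inequality: with `S = ∑ |Θ i| ^ q`, the vector
`Δ i = ρ S^(-1/p) sgn(Θ i) |Θ i|^(q-1)` has `ℓ^p` norm `ρ` and pairs with `Θ` to `ρ S^(1/q)`. -/
lemma exists_Lp_le_sum_mul_eq (hpq : p.HolderConjugate q) {ρ : ℝ} (hρ : 0 ≤ ρ) (Θ : ι → ℝ) :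
    ∃ Δ : ι → ℝ, (∑ i, |Δ i| ^ p) ^ (1 / p) ≤ ρ ∧
      ∑ i, Δ i * Θ i = ρ * (∑ i, |Θ i| ^ q) ^ (1 / q) := by
  set S := ∑ i, |Θ i| ^ q
  rcases (show 0 ≤ S by positivity).eq_or_lt with hS0 | hS
  · refine ⟨0, ?_, ?_⟩ <;> simp [← hS0, hpq.pos.ne', hpq.symm.pos.ne', hρ]
  set c := ρ * S ^ (-1 / p)
  have hc : 0 ≤ c := by positivity
  refine ⟨fun i => sgn (Θ i) * (c * |Θ i| ^ (q - 1)), le_of_eq ?_, ?_⟩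
  · have hterm : ∀ i, |sgn (Θ i) * (c * |Θ i| ^ (q - 1))| ^ p = c ^ p * |Θ i| ^ q := fun i => by
      rw [abs_mul, abs_sgn, one_mul, abs_of_nonneg (by positivity), mul_rpow hc (by positivity),
        ← rpow_mul (abs_nonneg _), hpq.symm.sub_one_mul_conj]
    rw [Finset.sum_congr rfl fun i _ => hterm i, ← Finset.mul_sum, mul_rpow (by positivity) hS.le,
      ← rpow_mul hc, mul_one_div_cancel hpq.pos.ne', rpow_one, mul_assoc, ← rpow_add hS,
      neg_div, neg_add_cancel, rpow_zero, mul_one]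
  · have hterm : ∀ i, sgn (Θ i) * (c * |Θ i| ^ (q - 1)) * Θ i = c * |Θ i| ^ q := fun i => by
      rw [mul_comm, ← mul_assoc, mul_comm (Θ i), sgn_mul_self, mul_left_comm,
        ← rpow_one_add' (abs_nonneg _) (by linarith [hpq.symm.lt]), add_sub_cancel]
    rw [Finset.sum_congr rfl fun i _ => hterm i, ← Finset.mul_sum, mul_assoc, ← rpow_add_one hS.ne']
    congr 2
    have := hpq.inv_add_inv_eq_one
    simp only [neg_div, one_div]
    linarith

lemma exists_Lp_le_sgn_ne_one_iff (hpq : p.HolderConjugate q) {ρ : ℝ} (hρ : 0 ≤ ρ)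
    (Θ x : ι → ℝ) :
    (∃ Δ : ι → ℝ, (∑ i, |Δ i| ^ p) ^ (1 / p) ≤ ρ ∧ sgn (∑ i, (x i + Δ i) * Θ i) ≠ 1) ↔
      ∑ i, x i * Θ i < ρ * (∑ i, |Θ i| ^ q) ^ (1 / q) := by
  simp only [sgn_ne_one_iff, add_mul, Finset.sum_add_distrib]
  constructor
  · rintro ⟨Δ, hΔ, hneg⟩
    linarith [abs_le.mp (abs_sum_mul_le_of_Lp_le hpq hΔ Θ)]
  · intro hlt
    obtain ⟨Δ, hΔ, hpair⟩ := exists_Lp_le_sum_mul_eq hpq hρ Θ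
    refine ⟨-Δ, by simpa using hΔ, ?_⟩
    simp only [Pi.neg_apply, neg_mul, Finset.sum_neg_distrib, hpair]
    linarith

lemma exists_Lp_le_sgn_ne_neg_one_iff (hpq : p.HolderConjugate q) {ρ : ℝ} (hρ : 0 ≤ ρ)
    (Θ x : ι → ℝ) :
    (∃ Δ : ι → ℝ, (∑ i, |Δ i| ^ p) ^ (1 / p) ≤ ρ ∧ sgn (∑ i, (x i + Δ i) * Θ i) ≠ -1) ↔
      -(ρ * (∑ i, |Θ i| ^ q) ^ (1 / q)) ≤ ∑ i, x i * Θ i := by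
  simp only [sgn_ne_neg_one_iff, add_mul, Finset.sum_add_distrib]
  constructor
  · rintro ⟨Δ, hΔ, hnonneg⟩
    linarith [abs_le.mp (abs_sum_mul_le_of_Lp_le hpq hΔ Θ)]
  · intro hle
    obtain ⟨Δ, hΔ, hpair⟩ := exists_Lp_le_sum_mul_eq hpq hρ Θ
    exact ⟨Δ, hΔ, by linarith⟩

end HolderDuality

lemma gaussianReal_pi_map_sum_mul {ι : Type*} [Fintype ι] (m c : ι → ℝ) (v : ι → ℝ≥0) :
    (Measure.pi fun i => gaussianReal (m i) (v i)).map (fun h => ∑ i, h i * c i)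
      = gaussianReal (∑ i, m i * c i) (∑ i, (c i ^ 2).toNNReal * v i) := by
  have hscale : (Measure.pi fun i => gaussianReal (m i) (v i)).map (fun h i => h i * c i)
      = Measure.pi fun i => gaussianReal (m i * c i) ((c i ^ 2).toNNReal * v i) := by
    rw [Measure.pi_map_pi (f := fun i x => x * c i) fun i => by fun_prop]
    simp_rw [gaussianReal_map_mul_const, Real.toNNReal_of_nonneg (sq_nonneg _), mul_comm (c _)]
  rw [show (fun h : ι → ℝ => ∑ i, h i * c i) = (fun h => ∑ i, h i) ∘ (fun h i => h i * c i)
      from rfl, ← Measure.map_map (by fun_prop) (by fun_prop), hscale]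
  refine Measure.ext_of_charFun (funext fun t => ?_)
  rw [charFun_map_sum_pi_eq_prod, Finset.prod_apply]
  simp only [charFun_gaussianReal, ← Complex.exp_sum]
  congr 1
  push_cast
  simp only [Finset.sum_sub_distrib, Finset.mul_sum, Finset.sum_mul, Finset.sum_div]

lemma gaussianReal_pi_map_sum_mul_of_sum_sq_eq_one {ι : Type*} [Fintype ι] (m : ι → ℝ)
    (v : ℝ≥0) {c : ι → ℝ} (hc : ∑ i, c i ^ 2 = 1) :
    (Measure.pi fun i => gaussianReal (m i) v).map (fun h => ∑ i, h i * c i)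
      = gaussianReal (∑ i, m i * c i) v := by
  rw [gaussianReal_pi_map_sum_mul, ← Finset.sum_mul,
    ← Real.toNNReal_sum_of_nonneg fun i _ => sq_nonneg _, hc, Real.toNNReal_one, one_mul]

section StandardGaussian

variable (m t : ℝ) {σ : ℝ}

lemma gaussianReal_Iic_eq_standard (hσ : 0 < σ) :
    gaussianReal m (σ ^ 2).toNNReal (Iic t) = gaussianReal 0 1 (Iic ((t - m) / σ)) := by
  have hstd : (gaussianReal m (σ ^ 2).toNNReal).map (fun x => (x - m) / σ) = gaussianReal 0 1 := by
    rw [show (fun x => (x - m) / σ) = (· / σ) ∘ (· - m) from rfl,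
      ← Measure.map_map (by fun_prop) (by fun_prop), gaussianReal_map_sub_const,
      gaussianReal_map_div_const, sub_self, zero_div]
    congr
    ext
    simp [hσ.ne', sq_nonneg]
  rw [← hstd, Measure.map_apply (by fun_prop) measurableSet_Iic]
  congr 1
  ext x
  simp [div_le_div_iff_of_pos_right hσ]

lemma gaussianReal_Iio_eq_standard (hσ : 0 < σ) :
    gaussianReal m (σ ^ 2).toNNReal (Iio t) = gaussianReal 0 1 (Iic ((t - m) / σ)) := by
  have := nullSingletonClass_gaussianReal (μ := m) (v := (σ ^ 2).toNNReal) (by positivity)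
  rw [measure_congr Iio_ae_eq_Iic, gaussianReal_Iic_eq_standard m t hσ]

lemma gaussianReal_Ici_eq_standard (hσ : 0 < σ) :
    gaussianReal m (σ ^ 2).toNNReal (Ici t) = gaussianReal 0 1 (Iic ((m - t) / σ)) := by
  nth_rw 1 [← neg_neg m]
  rw [← gaussianReal_map_neg, Measure.map_apply (by fun_prop) measurableSet_Ici,
    show (fun x => -x) ⁻¹' Ici t = Iic (-t) by ext; simp,
    gaussianReal_Iic_eq_standard _ _ hσ]
  congr 2
  ring

end StandardGaussian

section GaussMixture

variable {n : ℕ} (μv : Fin n → ℝ) {σ : ℝ}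

lemma gaussMixture_apply (S : Set ((Fin n → ℝ) × ℝ)) :
    gaussMixture n μv σ S
      = 1 / 2 * (Measure.pi fun i => gaussianReal (μv i) (σ ^ 2).toNNReal) ((·, (1 : ℝ)) ⁻¹' S)
        + 1 / 2 * (Measure.pi fun i => gaussianReal (-μv i) (σ ^ 2).toNNReal)
          ((·, (-1 : ℝ)) ⁻¹' S) := by
  rw [gaussMixture, Measure.add_apply, Measure.smul_apply, Measure.smul_apply,
    (measurableEmbedding_prod_mk_right (1 : ℝ)).map_apply,
    (measurableEmbedding_prod_mk_right (-1 : ℝ)).map_apply, smul_eq_mul, smul_eq_mul]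

lemma gaussMixture_eq_of_slices (hσ : 0 < σ) {Θ : Fin n → ℝ} (hΘ : ∑ i, Θ i ^ 2 = 1)
    {S : Set ((Fin n → ℝ) × ℝ)} (r : ℝ)
    (hpos : (·, (1 : ℝ)) ⁻¹' S = (fun h => ∑ i, h i * Θ i) ⁻¹' Iio r)
    (hneg : (·, (-1 : ℝ)) ⁻¹' S = (fun h => ∑ i, h i * Θ i) ⁻¹' Ici (-r)) :
    gaussMixture n μv σ S = gaussianReal 0 1 (Iic ((r - ∑ i, μv i * Θ i) / σ)) := by
  rw [gaussMixture_apply, hpos, hneg, ← Measure.map_apply (by fun_prop) measurableSet_Iio,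
    ← Measure.map_apply (by fun_prop) measurableSet_Ici,
    gaussianReal_pi_map_sum_mul_of_sum_sq_eq_one _ _ hΘ,
    gaussianReal_pi_map_sum_mul_of_sum_sq_eq_one _ _ hΘ,
    gaussianReal_Iio_eq_standard _ _ hσ, gaussianReal_Ici_eq_standard _ _ hσ]
  simp only [neg_mul, Finset.sum_neg_distrib, sub_neg_eq_add, neg_add_eq_sub]
  rw [← mul_add, ← two_mul, ← mul_assoc, one_div,
    ENNReal.inv_mul_cancel two_ne_zero ENNReal.ofNat_ne_top, one_mul]

end GaussMixture

/-- Under the Gaussian mixture model, the adversarial risk with `ℓ^p` perturbation budget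
`ρ` of `g(h) = sgn(⟨h,Θ⟩)`, `‖Θ‖₂ = 1`, equals `Φ((ρ‖Θ‖_q - ⟨μv,Θ⟩)/σ)`, and hence the
adversarial gap equals `Φ((ρ‖Θ‖_q - ⟨μv,Θ⟩)/σ) - Φ(-⟨μv,Θ⟩/σ)`. -/
theorem gaussMixture_adv_risk {n : ℕ} (p q : ℝ) (hpq : Real.HolderConjugate p q)
    (ρ : ℝ) (hρ : 0 ≤ ρ) (μv : Fin n → ℝ) (σ : ℝ) (hσ : 0 < σ)
    (Θ : Fin n → ℝ) (hΘ : ∑ i, Θ i ^ 2 = 1) :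
    ((gaussMixture n μv σ) {w : (Fin n → ℝ) × ℝ | ∃ Δh : Fin n → ℝ,
        (∑ i, |Δh i| ^ p) ^ (1 / p) ≤ ρ ∧ sgn (∑ i, (w.1 i + Δh i) * Θ i) ≠ w.2}).toReal
      = (gaussianReal 0 1 (Set.Iic
          ((ρ * (∑ i, |Θ i| ^ q) ^ (1 / q) - ∑ i, μv i * Θ i) / σ))).toReal ∧
    ((gaussMixture n μv σ) {w : (Fin n → ℝ) × ℝ | ∃ Δh : Fin n → ℝ,
        (∑ i, |Δh i| ^ p) ^ (1 / p) ≤ ρ ∧ sgn (∑ i, (w.1 i + Δh i) * Θ i) ≠ w.2}).toReal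
      - ((gaussMixture n μv σ)
          {w : (Fin n → ℝ) × ℝ | sgn (∑ i, w.1 i * Θ i) ≠ w.2}).toReal
      = (gaussianReal 0 1 (Set.Iic
          ((ρ * (∑ i, |Θ i| ^ q) ^ (1 / q) - ∑ i, μv i * Θ i) / σ))).toReal
        - (gaussianReal 0 1 (Set.Iic (-(∑ i, μv i * Θ i) / σ))).toReal := by
  have hadv := gaussMixture_eq_of_slices μv hσ hΘ (ρ * (∑ i, |Θ i| ^ q) ^ (1 / q))
    (S := {w | ∃ Δh : Fin n → ℝ,
      (∑ i, |Δh i| ^ p) ^ (1 / p) ≤ ρ ∧ sgn (∑ i, (w.1 i + Δh i) * Θ i) ≠ w.2})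
    (by ext h; exact exists_Lp_le_sgn_ne_one_iff hpq hρ Θ h)
    (by ext h; exact exists_Lp_le_sgn_ne_neg_one_iff hpq hρ Θ h)
  have hnat := gaussMixture_eq_of_slices μv hσ hΘ (S := {w | sgn (∑ i, w.1 i * Θ i) ≠ w.2}) 0
    (by ext h; exact sgn_ne_one_iff) (by ext h; simpa using sgn_ne_neg_one_iff)
  rw [hadv, hnat, zero_sub]
  exact ⟨rfl, rfl⟩
end

section
/- With Y uniform on a finite label set 𝒴, S the input random variable, and e an encoder, for every downstream classifier f: AdvRisk_τ(f ∘ e) ≥ 1 - (I(S;e(S)) - GRV_τ(e) + log 2)/log|𝒴|, where GRV_τ(e) = I(S;e(S)) - inf_{μ_{S'} ∈ B_∞(μ_S,τ)} I(S';e(S')). -/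
open scoped Classical

/-- Shannon entropy of a probability mass function on a finite type. -/
noncomputable def pmfEntropy {α : Type*} [Fintype α] (p : PMF α) : ℝ :=
  ∑ a, -(p a).toReal * Real.log (p a).toReal

/-- Mutual information `I(X;Y) = H(X) + H(Y) - H(X,Y)` on a finite probability space. -/
noncomputable def mutualInfo {Ω α β : Type*} [Fintype Ω] [Fintype α] [Fintype β]
    (p : PMF Ω) (X : Ω → α) (Y : Ω → β) : ℝ :=
  pmfEntropy (p.map X) + pmfEntropy (p.map Y) - pmfEntropy (p.map fun ω => (X ω, Y ω))

/-- `ν` lies in the `∞`-Wasserstein ball of radius `τ` around `μ`: there is a coupling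
that moves each point a distance at most `τ`. -/
def inWassersteinBall {Ω : Type*} [MetricSpace Ω] (μ ν : PMF Ω) (τ : ℝ) : Prop :=
  ∃ π : PMF (Ω × Ω), π.map Prod.fst = μ ∧ π.map Prod.snd = ν ∧
    ∀ q ∈ π.support, dist q.1 q.2 ≤ τ

/-- Graph representation vulnerability of an encoder `e` at budget `τ` for input law `μ`:
`GRV_τ(e) = I(S;e(S)) - inf_{μ' ∈ B_∞(μ,τ)} I(S';e(S'))`. -/
noncomputable def grv {Ω Z : Type*} [Fintype Ω] [MetricSpace Ω] [Fintype Z]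
    (e : Ω → Z) (μ : PMF Ω) (τ : ℝ) : ℝ :=
  mutualInfo μ id e -
    sInf {x : ℝ | ∃ ν : PMF Ω, inWassersteinBall μ ν τ ∧ x = mutualInfo ν id e}

/-!
Fix a law `ν` in the `∞`-Wasserstein ball around the input law and glue the data law of `(S, Y)`
with a coupling of `(S, S')`, `S' ~ ν`, that moves no point farther than `τ`. Under the glued law
`Y` is still uniform, and `f (e S') ≠ Y` forces a misclassified point within `τ` of `S`, so the
misclassification probability of `f` on `(Y, e S')` is at most the adversarial risk. Fano's
inequality then gives `log |𝒴| ≤ H(e S') + log 2 + P_err log |𝒴|`, and `H(e S') ≤ I(S'; e S')`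
because `e` is deterministic. Taking the infimum over `ν` proves the bound, since
`I(S; e S) - GRV_τ(e)` is exactly that infimum.
-/

open Finset Real

namespace PMF

variable {α β : Type*}

theorem apply_le_map_apply (p : PMF α) (g : α → β) (a : α) : p a ≤ p.map g (g a) := by
  rw [map_apply]
  exact le_of_eq_of_le (if_pos rfl).symm (ENNReal.le_tsum a)

variable [Fintype α] [Fintype β]

theorem sum_toReal_eq_one (p : PMF α) : ∑ a, (p a).toReal = 1 := by
  have h := p.tsum_coe
  rw [tsum_fintype] at h
  rw [← ENNReal.toReal_sum fun a _ => p.apply_ne_top a, h, ENNReal.toReal_one]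

theorem sum_map_toReal_mul (p : PMF α) (g : α → β) (G : β → ℝ) :
    ∑ b, (p.map g b).toReal * G b = ∑ a, (p a).toReal * G (g a) := by
  have hmap : ∀ b, (p.map g b).toReal = ∑ a, if b = g a then (p a).toReal else 0 := fun b => by
    rw [map_apply, tsum_fintype,
      ENNReal.toReal_sum fun a _ => by split_ifs <;> simp [p.apply_ne_top]]
    exact sum_congr rfl fun a _ => by split_ifs <;> rfl
  simp only [hmap, sum_mul, ite_mul, zero_mul]
  rw [sum_comm]
  simp

theorem map_fst_apply (p : PMF (α × β)) (a : α) : p.map Prod.fst a = ∑ b, p (a, b) := by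
  rw [map_apply, tsum_fintype, Fintype.sum_prod_type]
  rw [sum_eq_single a (fun x _ hx => sum_eq_zero fun b _ => if_neg hx.symm) (by simp)]
  exact sum_congr rfl fun b _ => if_pos rfl

end PMF

theorem gibbs_inequality {ι : Type*} [Fintype ι] (a b : ι → ℝ) (ha : ∀ i, 0 ≤ a i)
    (ha_sum : ∑ i, a i = 1) (hb : ∀ i, 0 ≤ b i) (hb_sum : ∑ i, b i ≤ 1)
    (hab : ∀ i, 0 < a i → 0 < b i) :
    ∑ i, -a i * log (a i) ≤ ∑ i, -a i * log (b i) := by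
  have hterm : ∀ i, -a i * log (b i) - -a i * log (a i) ≥ a i - b i := fun i => by
    rcases (ha i).eq_or_lt with h | h
    · simp [← h, hb i]
    · have hlog := log_le_sub_one_of_pos (div_pos (hab i h) h)
      rw [log_div (hab i h).ne' h.ne'] at hlog
      have := mul_le_mul_of_nonneg_left hlog h.le
      rw [mul_sub, mul_sub, mul_div_cancel₀ _ h.ne'] at this
      linarith
  have := sum_le_sum fun i (_ : i ∈ univ) => hterm i
  rw [sum_sub_distrib, sum_sub_distrib] at this
  linarith

section Entropy

variable {α β : Type*} [Fintype α] [Fintype β]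

theorem pmfEntropy_map_le (p : PMF α) (g : α → β) : pmfEntropy (p.map g) ≤ pmfEntropy p := by
  calc pmfEntropy (p.map g)
      = ∑ a, (p a).toReal * -log (p.map g (g a)).toReal := by
        rw [pmfEntropy, ← PMF.sum_map_toReal_mul p g fun b => -log (p.map g b).toReal]
        exact sum_congr rfl fun b _ => by ring
    _ ≤ ∑ a, (p a).toReal * -log (p a).toReal := sum_le_sum fun a _ => by
        rcases ENNReal.toReal_nonneg.eq_or_lt with h | h
        · rw [← h, zero_mul, zero_mul]
        · gcongr
          exacts [PMF.apply_ne_top _ _, p.apply_le_map_apply g a]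
    _ = pmfEntropy p := sum_congr rfl fun a _ => by ring

theorem pmfEntropy_eq_log_card (p : PMF α) (hp : ∀ a, p a = (Fintype.card α : ENNReal)⁻¹) :
    pmfEntropy p = log (Fintype.card α) := by
  rcases (Fintype.card α).eq_zero_or_pos with h | h
  · have : IsEmpty α := Fintype.card_eq_zero_iff.mp h
    simp [pmfEntropy]
  · simp only [pmfEntropy, hp, ENNReal.toReal_inv, ENNReal.toReal_natCast, log_inv, sum_const,
      card_univ, nsmul_eq_mul]
    field_simp

theorem pmfEntropy_map_le_mutualInfo_id {Ω Z : Type*} [Fintype Ω] [Fintype Z] (ν : PMF Ω)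
    (e : Ω → Z) : pmfEntropy (ν.map e) ≤ mutualInfo ν id e := by
  have := pmfEntropy_map_le ν fun ω => (id ω, e ω)
  rw [mutualInfo, PMF.map_id]
  linarith

end Entropy

section Fano

variable {𝒴 Z : Type*} [Fintype 𝒴]

/-- Reference conditional law of `Y` given `W = w` in Fano's inequality: mass `1/2` on the guess
`f w`, the other half spread uniformly over the remaining `|𝒴| - 1` labels. -/
noncomputable def fanoWeight (f : Z → 𝒴) (t : 𝒴 × Z) : ℝ :=
  if f t.2 = t.1 then 1 / 2 else (2 * ((Fintype.card 𝒴 : ℝ) - 1))⁻¹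

variable (f : Z → 𝒴)

theorem fanoWeight_pos (hcard : 2 ≤ Fintype.card 𝒴) (t : 𝒴 × Z) : 0 < fanoWeight f t := by
  have : (2 : ℝ) ≤ Fintype.card 𝒴 := by exact_mod_cast hcard
  unfold fanoWeight
  split_ifs
  · norm_num
  · exact inv_pos.mpr (by linarith)

theorem sum_fanoWeight (hcard : 2 ≤ Fintype.card 𝒴) (w : Z) : ∑ y, fanoWeight f (y, w) = 1 := by
  have : (2 : ℝ) ≤ Fintype.card 𝒴 := by exact_mod_cast hcard
  have hrest : ∀ y ∈ univ.erase (f w),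
      fanoWeight f (y, w) = (2 * ((Fintype.card 𝒴 : ℝ) - 1))⁻¹ :=
    fun y hy => if_neg (ne_of_mem_erase hy).symm
  rw [← add_sum_erase _ _ (mem_univ (f w)), sum_congr rfl hrest, fanoWeight, if_pos rfl,
    sum_const, card_erase_of_mem (mem_univ _), card_univ, nsmul_eq_mul, Nat.cast_sub (by omega),
    Nat.cast_one]
  have : (Fintype.card 𝒴 : ℝ) - 1 ≠ 0 := by linarith
  field_simp
  ring

theorem neg_log_fanoWeight_le (hcard : 2 ≤ Fintype.card 𝒴) (t : 𝒴 × Z) :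
    -log (fanoWeight f t) ≤ log 2 + log (Fintype.card 𝒴) * if f t.2 ≠ t.1 then 1 else 0 := by
  have : (2 : ℝ) ≤ Fintype.card 𝒴 := by exact_mod_cast hcard
  by_cases h : f t.2 = t.1
  · simp [fanoWeight, h]
  · rw [fanoWeight, if_neg h, if_pos h, log_inv, neg_neg, log_mul two_ne_zero (by linarith),
      mul_one]
    gcongr <;> linarith

variable [Fintype Z]

noncomputable def misclassProb (q : PMF (𝒴 × Z)) : ℝ :=
  ∑ t, (q t).toReal * if f t.2 ≠ t.1 then 1 else 0

theorem fano_inequality (hcard : 2 ≤ Fintype.card 𝒴) (q : PMF (𝒴 × Z)) :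
    pmfEntropy q ≤
      pmfEntropy (q.map Prod.snd) + log 2 + log (Fintype.card 𝒴) * misclassProb f q := by
  set W : Z → ℝ := fun w => (q.map Prod.snd w).toReal
  have hqW (t : 𝒴 × Z) : (q t).toReal ≤ W t.2 :=
    ENNReal.toReal_mono (PMF.apply_ne_top _ _) (q.apply_le_map_apply Prod.snd t)
  have hgibbs := gibbs_inequality (fun t => (q t).toReal) (fun t => W t.2 * fanoWeight f t)
    (fun t => ENNReal.toReal_nonneg) q.sum_toReal_eq_one
    (fun t => mul_nonneg ENNReal.toReal_nonneg (fanoWeight_pos f hcard t).le)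
    (by
      rw [Fintype.sum_prod_type_right]
      simp only [← mul_sum, sum_fanoWeight f hcard, mul_one]
      exact (q.map Prod.snd).sum_toReal_eq_one.le)
    (fun t ht => mul_pos (ht.trans_le (hqW t)) (fanoWeight_pos f hcard t))
  calc pmfEntropy q
      ≤ ∑ t, -(q t).toReal * log (W t.2 * fanoWeight f t) := hgibbs
    _ = ∑ t, (q t).toReal * -log (W t.2) + ∑ t, (q t).toReal * -log (fanoWeight f t) := by
        rw [← sum_add_distrib]
        refine sum_congr rfl fun t _ => ?_
        rcases ENNReal.toReal_nonneg.eq_or_lt with h | h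
        · rw [← h]; ring
        · rw [log_mul (h.trans_le (hqW t)).ne' (fanoWeight_pos f hcard t).ne']; ring
    _ ≤ pmfEntropy (q.map Prod.snd) + (log 2 + log (Fintype.card 𝒴) * misclassProb f q) := by
        gcongr
        · rw [pmfEntropy, ← PMF.sum_map_toReal_mul q Prod.snd fun w => -log (W w)]
          exact le_of_eq (sum_congr rfl fun w _ => by ring)
        · calc ∑ t, (q t).toReal * -log (fanoWeight f t)
              ≤ ∑ t, (q t).toReal *
                  (log 2 + log (Fintype.card 𝒴) * if f t.2 ≠ t.1 then 1 else 0) :=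
                sum_le_sum fun t _ => mul_le_mul_of_nonneg_left
                  (neg_log_fanoWeight_le f hcard t) ENNReal.toReal_nonneg
            _ = log 2 + log (Fintype.card 𝒴) * misclassProb f q := by
                simp only [mul_add, sum_add_distrib, ← sum_mul, q.sum_toReal_eq_one, one_mul,
                  misclassProb, mul_sum]
                exact congrArg _ (sum_congr rfl fun t _ => by ring)
    _ = _ := by ring

end Fano

section Coupling

variable {Ω 𝒴 : Type*} [Fintype Ω] [Fintype 𝒴]

theorem PMF.exists_bind_map_prodMk_eq (p : PMF (Ω × 𝒴)) :
    ∃ κ : Ω → PMF 𝒴, (p.map Prod.fst).bind (fun s => (κ s).map (Prod.mk s)) = p := by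
  set μ := p.map Prod.fst
  have hκ : ∀ s, ∃ k : PMF 𝒴, ∀ y, μ s * k y = p (s, y) := fun s => by
    by_cases hs : μ s = 0
    · refine ⟨p.map Prod.snd, fun y => ?_⟩
      rw [hs, zero_mul, eq_comm, ← nonpos_iff_eq_zero, ← hs]
      exact p.apply_le_map_apply Prod.fst (s, y)
    · refine ⟨PMF.ofFintype (fun y => p (s, y) / μ s) ?_, fun y => ?_⟩
      · simp only [div_eq_mul_inv]
        rw [← sum_mul, ← PMF.map_fst_apply, ENNReal.mul_inv_cancel hs (PMF.apply_ne_top _ _)]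
      · exact ENNReal.mul_div_cancel hs (PMF.apply_ne_top _ _)
  choose κ hκ using hκ
  refine ⟨κ, PMF.ext fun ⟨s, y⟩ => ?_⟩
  rw [PMF.bind_apply, tsum_fintype]
  simp only [PMF.map_apply, tsum_fintype, Prod.mk.injEq]
  rw [sum_eq_single s (fun x _ hx => by simp [Ne.symm hx]) (by simp)]
  simp [hκ]

theorem PMF.exists_glue (p : PMF (Ω × 𝒴)) (γ : PMF (Ω × Ω))
    (hγ : γ.map Prod.fst = p.map Prod.fst) :
    ∃ q : PMF (Ω × Ω × 𝒴), q.map (fun t => (t.1, t.2.2)) = p ∧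
      q.map (fun t => t.2.1) = γ.map Prod.snd ∧ ∀ t ∈ q.support, (t.1, t.2.1) ∈ γ.support := by
  obtain ⟨κ, hκ⟩ := p.exists_bind_map_prodMk_eq
  refine ⟨γ.bind fun x => (κ x.1).map fun y => (x.1, x.2, y), ?_, ?_, ?_⟩
  · rw [PMF.map_bind]
    simp_rw [PMF.map_comp]
    rw [← hκ, ← hγ, PMF.bind_map]
    rfl
  · rw [PMF.map_bind]
    simp_rw [PMF.map_comp]
    change (γ.bind fun x => (κ x.1).map (Function.const 𝒴 x.2)) = _
    simp_rw [PMF.map_const]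
    exact PMF.bind_pure_comp Prod.snd γ
  · intro t ht
    simp only [PMF.mem_support_bind_iff, PMF.mem_support_map_iff] at ht
    obtain ⟨x, hx, y, -, rfl⟩ := ht
    exact hx

end Coupling

theorem inWassersteinBall_self {Ω : Type*} [MetricSpace Ω] (μ : PMF Ω) {τ : ℝ} (hτ : 0 ≤ τ) :
    inWassersteinBall μ μ τ := by
  refine ⟨μ.map fun s => (s, s), ?_, ?_, ?_⟩
  · rw [PMF.map_comp]; exact μ.map_id
  · rw [PMF.map_comp]; exact μ.map_id
  · rw [PMF.support_map]
    rintro _ ⟨s, -, rfl⟩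
    simpa using hτ

section AdversarialRisk

variable {Ω 𝒴 Z : Type*} [Fintype Ω] [MetricSpace Ω] [Fintype 𝒴] [Fintype Z]

noncomputable def advRisk (p : PMF (Ω × 𝒴)) (g : Ω → 𝒴) (τ : ℝ) : ℝ :=
  ∑ q : Ω × 𝒴, (p q).toReal * if ∃ s' : Ω, dist s' q.1 ≤ τ ∧ g s' ≠ q.2 then 1 else 0

theorem exists_joint_law_of_inWassersteinBall (p : PMF (Ω × 𝒴)) (e : Ω → Z) (f : Z → 𝒴)
    {ν : PMF Ω} {τ : ℝ} (hν : inWassersteinBall (p.map Prod.fst) ν τ) :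
    ∃ q : PMF (𝒴 × Z), q.map Prod.fst = p.map Prod.snd ∧ q.map Prod.snd = ν.map e ∧
      misclassProb f q ≤ advRisk p (f ∘ e) τ := by
  obtain ⟨γ, hγ₁, hγ₂, hγτ⟩ := hν
  obtain ⟨q, hq₁, hq₂, hqγ⟩ := p.exists_glue γ hγ₁
  refine ⟨q.map fun t => (t.2.2, e t.2.1), ?_, ?_, ?_⟩
  · rw [PMF.map_comp, ← hq₁, PMF.map_comp]
    rfl
  · rw [PMF.map_comp, ← hγ₂, ← hq₂, PMF.map_comp]
    rfl
  · rw [misclassProb, advRisk, PMF.sum_map_toReal_mul, ← hq₁, PMF.sum_map_toReal_mul]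
    refine sum_le_sum fun t _ => ?_
    by_cases ht : q t = 0
    · simp [ht]
    refine mul_le_mul_of_nonneg_left ?_ ENNReal.toReal_nonneg
    have hdist : dist t.2.1 t.1 ≤ τ := by
      rw [dist_comm]
      exact hγτ _ (hqγ t ht)
    split_ifs with herr hadv hadv
    · exact le_rfl
    · exact absurd ⟨t.2.1, hdist, herr⟩ hadv
    all_goals norm_num

theorem mul_log_card_sub_log_two_le_mutualInfo (p : PMF (Ω × 𝒴)) (e : Ω → Z) (f : Z → 𝒴)
    (huniform : ∀ y : 𝒴, p.map Prod.snd y = (Fintype.card 𝒴 : ENNReal)⁻¹)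
    (hcard : 2 ≤ Fintype.card 𝒴) {ν : PMF Ω} {τ : ℝ}
    (hν : inWassersteinBall (p.map Prod.fst) ν τ) :
    (1 - advRisk p (f ∘ e) τ) * log (Fintype.card 𝒴) - log 2 ≤ mutualInfo ν id e := by
  obtain ⟨q, hY, hW, hrisk⟩ := exists_joint_law_of_inWassersteinBall p e f hν
  have hlog : 0 ≤ log (Fintype.card 𝒴) := log_nonneg (by norm_cast; omega)
  have hfano : log (Fintype.card 𝒴) ≤
      pmfEntropy (ν.map e) + log 2 + log (Fintype.card 𝒴) * misclassProb f q :=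
    calc log (Fintype.card 𝒴) = pmfEntropy (q.map Prod.fst) := by
          rw [hY, pmfEntropy_eq_log_card _ huniform]
      _ ≤ pmfEntropy q := pmfEntropy_map_le q Prod.fst
      _ ≤ _ := hW ▸ fano_inequality f hcard q
  linarith [pmfEntropy_map_le_mutualInfo_id ν e, mul_le_mul_of_nonneg_left hrisk hlog]

end AdversarialRisk

/-- Fano-type lower bound (Theorem 3.4 of Zhu et al., graph version): with `Y` uniform on
a finite label set `𝒴`, input `S` with law the first marginal of `p`, and encoder `e`,
every downstream classifier `f` satisfies
`AdvRisk_τ(f ∘ e) ≥ 1 - (I(S;e(S)) - GRV_τ(e) + log 2)/log |𝒴|`. -/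
theorem advRisk_lower_bound {Ω 𝒴 Z : Type*} [Fintype Ω] [MetricSpace Ω]
    [Fintype 𝒴] [Fintype Z] (p : PMF (Ω × 𝒴)) (e : Ω → Z)
    (huniform : ∀ y : 𝒴, p.map Prod.snd y = (Fintype.card 𝒴 : ENNReal)⁻¹)
    (hcard : 2 ≤ Fintype.card 𝒴) (τ : ℝ) (hτ : 0 ≤ τ) (f : Z → 𝒴) :
    1 - (mutualInfo (p.map Prod.fst) id e - grv e (p.map Prod.fst) τ + Real.log 2)
          / Real.log (Fintype.card 𝒴)
      ≤ ∑ q : Ω × 𝒴, (p q).toReal *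
          (if ∃ s' : Ω, dist s' q.1 ≤ τ ∧ f (e s') ≠ q.2 then 1 else 0) := by
  have hlog : 0 < log (Fintype.card 𝒴) := log_pos (by exact_mod_cast hcard)
  have hinf : (1 - advRisk p (f ∘ e) τ) * log (Fintype.card 𝒴) - log 2 ≤
      sInf {x : ℝ | ∃ ν : PMF Ω, inWassersteinBall (p.map Prod.fst) ν τ ∧ x = mutualInfo ν id e} :=
    le_csInf ⟨_, _, inWassersteinBall_self _ hτ, rfl⟩ fun _ ⟨_, hν, hx⟩ =>
      hx ▸ mul_log_card_sub_log_two_le_mutualInfo p e f huniform hcard hν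
  rw [grv, sub_sub_cancel, sub_le_comm, le_div_iff₀ hlog]
  change (1 - advRisk p (f ∘ e) τ) * _ ≤ _
  linarith
end
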